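/- (One-step L∞-stability.) Assume hypothesis (H2), that the data are bounded above (sup_{k∈ℤ} ρ_k < ∞), and that the CFL condition λ ≤ min{(8 − 27α)/(27L), 2/(27L), α/L} holds. Then for every j ∈ ℤ, |ρ'_j| ≤ (1 + C̃·Δt)·sup_{k∈ℤ} ρ_k, where C̃ := [α + λ·L + (1 + λ·L)²]·M·(1 + θ)²·(sup |μ'|)·m. -/

import Mathlib

/-!
Write `S = sup ρ` and `m = Δx Σ ρ`. Let `c_l` be the difference quotient of `f(·, A⁻_{l+1/2})`
between the two interface values and `e_l` the flux jump caused by `A⁻_{l+1/2} ≠ A⁺_{l-1/2}`. Then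
the mid-time values are the "hat" values `ρ_l + (1 - λc_l) σ_l/2` and `ρ_l - (1 + λc_l) σ_l/2`,
shifted by `-λ e_l/2`. The limiter gives `|σ_l| ≤ 2θ min(ρ_l, S - ρ_l)`, so the hat values lie in
`[0, S]`. The update evaluated on hat values, with the convolution frozen at `A^{½}_{j-1/2}`, is
`(1 - α) ρ_j - (λ/2)(C₁ - α c_j) σ_j + ((α - λC₂)/2) b + ((α + λC₂)/2) b'`
for difference quotients `|C₁|, |C₂| ≤ L` and hat values `b, b'`. The middle term is at most
`(1 - α) min(ρ_j, S - ρ_j)` and `λL ≤ α` makes the last two coefficients nonnegative, so this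
frozen update lies in `[0, S]`. The difference to the true update is controlled by (H2) and the
Lipschitz bound on `μ`: both `e_l` and `A^{½}_{j+1/2} - A^{½}_{j-1/2}` are `O(Δx · m)` and enter
multiplied by `λ M S`, which produces `Δt · C̃ · S`.
-/

open MeasureTheory

noncomputable section

/-- minmod limiter of three arguments. -/
def minmod3 (a b c : ℝ) : ℝ :=
  if 0 < a ∧ 0 < b ∧ 0 < c then min a (min b c)
  else if a < 0 ∧ b < 0 ∧ c < 0 then max a (max b c)
  else 0

/-- MUSCL slopes `σ_j = 2θ·minmod(ρ_j − ρ_{j−1}, (ρ_{j+1} − ρ_{j−1})/2, ρ_{j+1} − ρ_j)`. -/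
def slp (θ : ℝ) (ρ : ℤ → ℝ) (j : ℤ) : ℝ :=
  2 * θ * minmod3 (ρ j - ρ (j - 1)) ((ρ (j + 1) - ρ (j - 1)) / 2) (ρ (j + 1) - ρ j)

/-- left interface value `ρ⁻_{j+1/2} = ρ_j + σ_j/2`. -/
def intL (θ : ℝ) (ρ : ℤ → ℝ) (j : ℤ) : ℝ := ρ j + slp θ ρ j / 2

/-- right interface value `ρ⁺_{j−1/2} = ρ_j − σ_j/2`. -/
def intR (θ : ℝ) (ρ : ℤ → ℝ) (j : ℤ) : ℝ := ρ j - slp θ ρ j / 2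

/-- discrete convolution `A_j = Δx·Σ_l μ((j−l)Δx)·ρ_l`. -/
def Adisc (μ : ℝ → ℝ) (Δx : ℝ) (ρ : ℤ → ℝ) (j : ℤ) : ℝ :=
  Δx * ∑' l : ℤ, μ (((j : ℝ) - (l : ℝ)) * Δx) * ρ l

/-- `s_j = θ·(A_{j+1} − A_{j−1})`. -/
def sdisc (μ : ℝ → ℝ) (θ Δx : ℝ) (ρ : ℤ → ℝ) (j : ℤ) : ℝ :=
  θ * (Adisc μ Δx ρ (j + 1) - Adisc μ Δx ρ (j - 1))

/-- `A⁻_{j+1/2} = A_j + s_j/2`. -/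
def AdiscL (μ : ℝ → ℝ) (θ Δx : ℝ) (ρ : ℤ → ℝ) (j : ℤ) : ℝ :=
  Adisc μ Δx ρ j + sdisc μ θ Δx ρ j / 2

/-- `A⁺_{j−1/2} = A_j − s_j/2`. -/
def AdiscR (μ : ℝ → ℝ) (θ Δx : ℝ) (ρ : ℤ → ℝ) (j : ℤ) : ℝ :=
  Adisc μ Δx ρ j - sdisc μ θ Δx ρ j / 2

/-- mid-time value `ρ^{½,−}_{j+1/2}`. -/
def midL (f : ℝ → ℝ → ℝ) (μ : ℝ → ℝ) (θ lam Δx : ℝ) (ρ : ℤ → ℝ) (j : ℤ) : ℝ :=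
  intL θ ρ j - lam / 2 *
    (f (intL θ ρ j) (AdiscL μ θ Δx ρ j) - f (intR θ ρ j) (AdiscR μ θ Δx ρ j))

/-- mid-time value `ρ^{½,+}_{j−1/2}`. -/
def midR (f : ℝ → ℝ → ℝ) (μ : ℝ → ℝ) (θ lam Δx : ℝ) (ρ : ℤ → ℝ) (j : ℤ) : ℝ :=
  intR θ ρ j - lam / 2 *
    (f (intL θ ρ j) (AdiscL μ θ Δx ρ j) - f (intR θ ρ j) (AdiscR μ θ Δx ρ j))

/-- mid-time convolution `A^{½}_{j+1/2}`. -/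
def Amid (f : ℝ → ℝ → ℝ) (μ : ℝ → ℝ) (θ lam Δx : ℝ) (ρ : ℤ → ℝ) (j : ℤ) : ℝ :=
  Δx / 2 * ∑' l : ℤ,
    (μ (((j : ℝ) + 1 - (l : ℝ)) * Δx) * midR f μ θ lam Δx ρ l +
     μ (((j : ℝ) - (l : ℝ)) * Δx) * midL f μ θ lam Δx ρ l)

/-- Lax–Friedrichs type numerical flux `F(u,v,A)`. -/
def numFlux (f : ℝ → ℝ → ℝ) (α lam u v A : ℝ) : ℝ :=
  (f u A + f v A) / 2 - α * (v - u) / (2 * lam)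

/-- MUSCL–Hancock update `ρ'_j`. -/
def mhUpdate (f : ℝ → ℝ → ℝ) (μ : ℝ → ℝ) (θ α lam Δx : ℝ) (ρ : ℤ → ℝ) (j : ℤ) : ℝ :=
  ρ j - lam *
    (numFlux f α lam (midL f μ θ lam Δx ρ j) (midR f μ θ lam Δx ρ (j + 1))
        (Amid f μ θ lam Δx ρ j) -
     numFlux f α lam (midL f μ θ lam Δx ρ (j - 1)) (midR f μ θ lam Δx ρ j)
        (Amid f μ θ lam Δx ρ (j - 1)))


lemma abs_sub_le_of_abs_deriv_le {g : ℝ → ℝ} {C : ℝ} (hg : Differentiable ℝ g)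
    (hC : ∀ x, |deriv g x| ≤ C) (x y : ℝ) : |g x - g y| ≤ C * |x - y| :=
  convex_univ.norm_image_sub_le_of_norm_deriv_le (fun z _ => hg z) (fun z _ => hC z)
    (Set.mem_univ y) (Set.mem_univ x)

lemma exists_abs_le_and_sub_eq_mul {g : ℝ → ℝ} {C : ℝ} (hC : 0 ≤ C)
    (hg : ∀ x y, |g x - g y| ≤ C * |x - y|) (x y : ℝ) :
    ∃ c, |c| ≤ C ∧ g x - g y = c * (x - y) := by
  rcases eq_or_ne x y with rfl | hxy
  · exact ⟨0, by simpa using hC, by simp⟩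
  · have hxy' : x - y ≠ 0 := sub_ne_zero.2 hxy
    refine ⟨(g x - g y) / (x - y), ?_, (div_mul_cancel₀ _ hxy').symm⟩
    rw [abs_div, div_le_iff₀ (abs_pos.2 hxy')]
    exact hg x y

lemma abs_tsum_sub_tsum_le {ι : Type*} {u v w : ι → ℝ} {C : ℝ} (hu : Summable u) (hv : Summable v)
    (hw : Summable w) (huv : ∀ l, |u l - v l| ≤ C * w l) :
    |∑' l, u l - ∑' l, v l| ≤ C * ∑' l, w l := by
  rw [← hu.tsum_sub hv, ← tsum_mul_left]
  exact tsum_of_norm_bounded (f := fun l => u l - v l) (hw.mul_left C).hasSum huv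

lemma abs_minmod3_le {x y z S : ℝ} (hx : x ∈ Set.Icc 0 S) (hy : y ∈ Set.Icc 0 S)
    (hz : z ∈ Set.Icc 0 S) (b : ℝ) :
    |minmod3 (y - x) b (z - y)| ≤ min y (S - y) := by
  obtain ⟨hx0, hxS⟩ := hx
  obtain ⟨hy0, hyS⟩ := hy
  obtain ⟨hz0, hzS⟩ := hz
  unfold minmod3
  split_ifs with hpos hneg
  · rw [abs_of_pos (lt_min hpos.1 (lt_min hpos.2.1 hpos.2.2))]
    have h₁ := min_le_left (y - x) (min b (z - y))
    have h₂ := (min_le_right (y - x) (min b (z - y))).trans (min_le_right b (z - y))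
    exact le_min (by linarith) (by linarith)
  · rw [abs_of_neg (max_lt hneg.1 (max_lt hneg.2.1 hneg.2.2))]
    have h₁ := le_max_left (y - x) (max b (z - y))
    have h₂ := (le_max_right b (z - y)).trans (le_max_right (y - x) (max b (z - y)))
    exact le_min (by linarith) (by linarith)
  · simpa using le_min hy0 (sub_nonneg.2 hyS)

lemma intL_add_intR (θ : ℝ) (ρ : ℤ → ℝ) (l : ℤ) : intL θ ρ l + intR θ ρ l = 2 * ρ l := by
  rw [intL, intR]; ring

section Reconstruction

variable {θ S : ℝ} {ρ : ℤ → ℝ}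

lemma abs_slp_le (hθ : 0 ≤ θ) (hρ : ∀ k, ρ k ∈ Set.Icc 0 S) (l : ℤ) :
    |slp θ ρ l| ≤ 2 * θ * min (ρ l) (S - ρ l) := by
  rw [slp, abs_mul, abs_of_nonneg (by positivity : (0 : ℝ) ≤ 2 * θ)]
  gcongr
  exact abs_minmod3_le (hρ _) (hρ _) (hρ _) _

lemma add_mul_slp_mem_Icc (hθ : 0 ≤ θ) (hρ : ∀ k, ρ k ∈ Set.Icc 0 S) {d : ℝ}
    (hd : |d| * θ ≤ 1) (l : ℤ) : ρ l + d * (slp θ ρ l / 2) ∈ Set.Icc 0 S := by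
  have hmin : 0 ≤ min (ρ l) (S - ρ l) := le_min (hρ l).1 (sub_nonneg.2 (hρ l).2)
  have h : |d * (slp θ ρ l / 2)| ≤ min (ρ l) (S - ρ l) := by
    calc |d * (slp θ ρ l / 2)| = |d| * (|slp θ ρ l| / 2) := by rw [abs_mul, abs_div, abs_two]
      _ ≤ |d| * (2 * θ * min (ρ l) (S - ρ l) / 2) := by gcongr; exact abs_slp_le hθ hρ l
      _ = |d| * θ * min (ρ l) (S - ρ l) := by ring
      _ ≤ min (ρ l) (S - ρ l) := mul_le_of_le_one_left hmin hd
  obtain ⟨h₁, h₂⟩ := abs_le.1 h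
  constructor <;> linarith [min_le_left (ρ l) (S - ρ l), min_le_right (ρ l) (S - ρ l)]

lemma add_mul_slp_mem_Icc_of_abs_le {lam L c : ℝ} (hθ0 : 0 ≤ θ) (hθ : (1 + lam * L) * θ ≤ 1)
    (hρ : ∀ k, ρ k ∈ Set.Icc 0 S) (hlam : 0 ≤ lam) (hc : |c| ≤ L) (l : ℤ) :
    ρ l + (1 - lam * c) * (slp θ ρ l / 2) ∈ Set.Icc 0 S ∧
      ρ l + -(1 + lam * c) * (slp θ ρ l / 2) ∈ Set.Icc 0 S := by
  have hc' : |lam * c| ≤ lam * L := by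
    rw [abs_mul, abs_of_nonneg hlam]; exact mul_le_mul_of_nonneg_left hc hlam
  have h₁ : |1 - lam * c| ≤ 1 + lam * L := (abs_sub _ _).trans (by rw [abs_one]; linarith)
  have h₂ : |-(1 + lam * c)| ≤ 1 + lam * L :=
    (abs_neg _).trans_le ((abs_add_le _ _).trans (by rw [abs_one]; linarith))
  exact ⟨add_mul_slp_mem_Icc hθ0 hρ ((by gcongr : |1 - lam * c| * θ ≤ _).trans hθ) l,
    add_mul_slp_mem_Icc hθ0 hρ ((by gcongr : |-(1 + lam * c)| * θ ≤ _).trans hθ) l⟩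

lemma intL_mem_Icc (hθ0 : 0 ≤ θ) (hθ1 : θ ≤ 1) (hρ : ∀ k, ρ k ∈ Set.Icc 0 S) (l : ℤ) :
    intL θ ρ l ∈ Set.Icc 0 S := by
  rw [show intL θ ρ l = ρ l + 1 * (slp θ ρ l / 2) by rw [intL]; ring]
  exact add_mul_slp_mem_Icc hθ0 hρ (by simpa using hθ1) l

lemma intR_mem_Icc (hθ0 : 0 ≤ θ) (hθ1 : θ ≤ 1) (hρ : ∀ k, ρ k ∈ Set.Icc 0 S) (l : ℤ) :
    intR θ ρ l ∈ Set.Icc 0 S := by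
  rw [show intR θ ρ l = ρ l + -1 * (slp θ ρ l / 2) by rw [intR]; ring]
  exact add_mul_slp_mem_Icc hθ0 hρ (by simpa using hθ1) l

end Reconstruction

section Convolution

variable {μ : ℝ → ℝ} {K B Δx : ℝ} {ρ : ℤ → ℝ}

lemma summable_mul_of_abs_le {ι : Type*} {w b : ι → ℝ} (hμB : ∀ x, |μ x| ≤ B)
    (hw : ∀ l, |w l| ≤ b l) (hb : Summable b) (x : ι → ℝ) : Summable fun l => μ (x l) * w l :=
  (hb.mul_left B).of_norm_bounded fun l => by
    rw [Real.norm_eq_abs, abs_mul]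
    exact mul_le_mul (hμB _) (hw l) (abs_nonneg _) ((abs_nonneg _).trans (hμB 0))

lemma abs_Adisc_sub_le (hμ : ∀ x y, |μ x - μ y| ≤ K * |x - y|) (hμB : ∀ x, |μ x| ≤ B)
    (hΔx : 0 ≤ Δx) (hρ0 : ∀ k, 0 ≤ ρ k) (hsum : Summable ρ) (i k : ℤ) :
    |Adisc μ Δx ρ i - Adisc μ Δx ρ k| ≤ K * |(i : ℝ) - k| * Δx * (Δx * ∑' l, ρ l) := by
  have hw : ∀ l, |ρ l| ≤ ρ l := fun l => (abs_of_nonneg (hρ0 l)).le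
  have hdiff : ∀ l : ℤ, |μ ((i - l) * Δx) * ρ l - μ ((k - l) * Δx) * ρ l|
      ≤ K * |(i : ℝ) - k| * Δx * ρ l := fun l => by
    rw [← sub_mul, abs_mul, abs_of_nonneg (hρ0 l)]
    refine mul_le_mul_of_nonneg_right ?_ (hρ0 l)
    calc |μ ((i - l) * Δx) - μ ((k - l) * Δx)| ≤ K * |(i - l) * Δx - (k - l) * Δx| := hμ _ _
      _ = K * |(i : ℝ) - k| * Δx := by
        rw [show ((i : ℝ) - l) * Δx - (k - l) * Δx = (i - k) * Δx by ring, abs_mul,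
          abs_of_nonneg hΔx, mul_assoc]
  rw [Adisc, Adisc, ← mul_sub, abs_mul, abs_of_nonneg hΔx]
  calc Δx * |∑' l : ℤ, μ ((i - l) * Δx) * ρ l - ∑' l : ℤ, μ ((k - l) * Δx) * ρ l|
      ≤ Δx * (K * |(i : ℝ) - k| * Δx * ∑' l, ρ l) := by
        gcongr
        exact abs_tsum_sub_tsum_le (summable_mul_of_abs_le hμB hw hsum _)
          (summable_mul_of_abs_le hμB hw hsum _) hsum hdiff
    _ = K * |(i : ℝ) - k| * Δx * (Δx * ∑' l, ρ l) := by ring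

lemma abs_sdisc_le {θ : ℝ} (hμ : ∀ x y, |μ x - μ y| ≤ K * |x - y|) (hμB : ∀ x, |μ x| ≤ B)
    (hθ : 0 ≤ θ) (hΔx : 0 ≤ Δx) (hρ0 : ∀ k, 0 ≤ ρ k) (hsum : Summable ρ) (l : ℤ) :
    |sdisc μ θ Δx ρ l| ≤ 2 * θ * K * Δx * (Δx * ∑' l, ρ l) := by
  have h := abs_Adisc_sub_le hμ hμB hΔx hρ0 hsum (l + 1) (l - 1)
  rw [show |((l + 1 : ℤ) : ℝ) - ((l - 1 : ℤ) : ℝ)| = 2 by push_cast; ring_nf; norm_num] at h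
  rw [sdisc, abs_mul, abs_of_nonneg hθ]
  calc θ * |Adisc μ Δx ρ (l + 1) - Adisc μ Δx ρ (l - 1)|
      ≤ θ * (K * 2 * Δx * (Δx * ∑' l, ρ l)) := by gcongr
    _ = 2 * θ * K * Δx * (Δx * ∑' l, ρ l) := by ring

end Convolution

section MidTime

variable {f : ℝ → ℝ → ℝ} {μ : ℝ → ℝ} {θ lam Δx L S : ℝ} {ρ : ℤ → ℝ}

lemma abs_flux_jump_le (hf0 : ∀ A, f 0 A = 0) (hfL : ∀ A x y, |f x A - f y A| ≤ L * |x - y|)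
    (hθ0 : 0 ≤ θ) (hθ1 : θ ≤ 1) (hρ : ∀ k, ρ k ∈ Set.Icc 0 S) (l : ℤ) :
    |f (intL θ ρ l) (AdiscL μ θ Δx ρ l) - f (intR θ ρ l) (AdiscR μ θ Δx ρ l)| ≤ 2 * L * ρ l := by
  have hf : ∀ x A, 0 ≤ x → |f x A| ≤ L * x := fun x A hx => by
    simpa [hf0, abs_of_nonneg hx] using hfL A x 0
  calc _ ≤ |f (intL θ ρ l) (AdiscL μ θ Δx ρ l)| + |f (intR θ ρ l) (AdiscR μ θ Δx ρ l)| :=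
        abs_sub _ _
    _ ≤ L * intL θ ρ l + L * intR θ ρ l :=
        add_le_add (hf _ _ (intL_mem_Icc hθ0 hθ1 hρ l).1) (hf _ _ (intR_mem_Icc hθ0 hθ1 hρ l).1)
    _ = 2 * L * ρ l := by rw [← mul_add, intL_add_intR]; ring

lemma abs_midL_le (hf0 : ∀ A, f 0 A = 0) (hfL : ∀ A x y, |f x A - f y A| ≤ L * |x - y|)
    (hlam : 0 ≤ lam) (hθ0 : 0 ≤ θ) (hθ1 : θ ≤ 1) (hρ : ∀ k, ρ k ∈ Set.Icc 0 S) (l : ℤ) :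
    |midL f μ θ lam Δx ρ l| ≤ intL θ ρ l + lam * L * ρ l := by
  have hjump := abs_flux_jump_le (μ := μ) (Δx := Δx) hf0 hfL hθ0 hθ1 hρ l
  calc |midL f μ θ lam Δx ρ l|
      ≤ |intL θ ρ l| + lam / 2 *
          |f (intL θ ρ l) (AdiscL μ θ Δx ρ l) - f (intR θ ρ l) (AdiscR μ θ Δx ρ l)| := by
        rw [midL]
        refine (abs_sub _ _).trans_eq ?_
        rw [abs_mul, abs_of_nonneg (by positivity : 0 ≤ lam / 2)]
    _ ≤ intL θ ρ l + lam / 2 * (2 * L * ρ l) := by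
        rw [abs_of_nonneg (intL_mem_Icc hθ0 hθ1 hρ l).1]; gcongr
    _ = intL θ ρ l + lam * L * ρ l := by ring

lemma abs_midR_le (hf0 : ∀ A, f 0 A = 0) (hfL : ∀ A x y, |f x A - f y A| ≤ L * |x - y|)
    (hlam : 0 ≤ lam) (hθ0 : 0 ≤ θ) (hθ1 : θ ≤ 1) (hρ : ∀ k, ρ k ∈ Set.Icc 0 S) (l : ℤ) :
    |midR f μ θ lam Δx ρ l| ≤ intR θ ρ l + lam * L * ρ l := by
  have hjump := abs_flux_jump_le (μ := μ) (Δx := Δx) hf0 hfL hθ0 hθ1 hρ l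
  calc |midR f μ θ lam Δx ρ l|
      ≤ |intR θ ρ l| + lam / 2 *
          |f (intL θ ρ l) (AdiscL μ θ Δx ρ l) - f (intR θ ρ l) (AdiscR μ θ Δx ρ l)| := by
        rw [midR]
        refine (abs_sub _ _).trans_eq ?_
        rw [abs_mul, abs_of_nonneg (by positivity : 0 ≤ lam / 2)]
    _ ≤ intR θ ρ l + lam / 2 * (2 * L * ρ l) := by
        rw [abs_of_nonneg (intR_mem_Icc hθ0 hθ1 hρ l).1]; gcongr
    _ = intR θ ρ l + lam * L * ρ l := by ring

lemma abs_midL_midR_le (hf0 : ∀ A, f 0 A = 0) (hfL : ∀ A x y, |f x A - f y A| ≤ L * |x - y|)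
    (hlam : 0 ≤ lam) (hL0 : 0 ≤ L) (hθ0 : 0 ≤ θ) (hθ1 : θ ≤ 1) (hρ : ∀ k, ρ k ∈ Set.Icc 0 S)
    (l : ℤ) :
    |midL f μ θ lam Δx ρ l| ≤ (1 + lam * L) * S ∧ |midR f μ θ lam Δx ρ l| ≤ (1 + lam * L) * S := by
  have h₁ := abs_midL_le (μ := μ) (Δx := Δx) hf0 hfL hlam hθ0 hθ1 hρ l
  have h₂ := abs_midR_le (μ := μ) (Δx := Δx) hf0 hfL hlam hθ0 hθ1 hρ l
  have h₃ := mul_le_mul_of_nonneg_left (hρ l).2 (by positivity : 0 ≤ lam * L)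
  exact ⟨by linarith [(intL_mem_Icc hθ0 hθ1 hρ l).2], by linarith [(intR_mem_Icc hθ0 hθ1 hρ l).2]⟩

lemma abs_Amid_sub_le {K B C : ℝ} (hμ : ∀ x y, |μ x - μ y| ≤ K * |x - y|)
    (hμB : ∀ x, |μ x| ≤ B) (hK : 0 ≤ K) (hΔx : 0 ≤ Δx)
    (hmid : ∀ l, |midR f μ θ lam Δx ρ l| + |midL f μ θ lam Δx ρ l| ≤ C * ρ l)
    (hsum : Summable ρ) (i k : ℤ) :
    |Amid f μ θ lam Δx ρ i - Amid f μ θ lam Δx ρ k|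
      ≤ C / 2 * K * |(i : ℝ) - k| * Δx * (Δx * ∑' l, ρ l) := by
  set R := midR f μ θ lam Δx ρ
  set Q := midL f μ θ lam Δx ρ
  have hR : ∀ l, |R l| ≤ C * ρ l := fun l => by linarith [hmid l, abs_nonneg (Q l)]
  have hQ : ∀ l, |Q l| ≤ C * ρ l := fun l => by linarith [hmid l, abs_nonneg (R l)]
  have hsumm : ∀ n : ℤ,
      Summable fun l : ℤ => μ ((n + 1 - l) * Δx) * R l + μ ((n - l) * Δx) * Q l := fun n =>
    (summable_mul_of_abs_le hμB hR (hsum.mul_left C) _).add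
      (summable_mul_of_abs_le hμB hQ (hsum.mul_left C) _)
  have hshift : ∀ a b : ℝ, a - b = ((i : ℝ) - k) * Δx →
      |μ a - μ b| ≤ K * |(i : ℝ) - k| * Δx := fun a b hab => by
    rw [mul_assoc, ← abs_of_nonneg hΔx, ← abs_mul, ← hab]
    exact hμ a b
  have hdiff : ∀ l : ℤ,
      |(μ ((i + 1 - l) * Δx) * R l + μ ((i - l) * Δx) * Q l) -
        (μ ((k + 1 - l) * Δx) * R l + μ ((k - l) * Δx) * Q l)|
        ≤ C * K * |(i : ℝ) - k| * Δx * ρ l := fun l => by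
    have h₁ := hshift ((i + 1 - l) * Δx) ((k + 1 - l) * Δx) (by ring)
    have h₂ := hshift ((i - l) * Δx) ((k - l) * Δx) (by ring)
    calc _ = |(μ ((i + 1 - l) * Δx) - μ ((k + 1 - l) * Δx)) * R l +
            (μ ((i - l) * Δx) - μ ((k - l) * Δx)) * Q l| := by ring_nf
      _ ≤ K * |(i : ℝ) - k| * Δx * (|R l| + |Q l|) := by
        refine (abs_add_le _ _).trans ?_
        rw [abs_mul, abs_mul, mul_add]
        gcongr
      _ ≤ K * |(i : ℝ) - k| * Δx * (C * ρ l) := by gcongr; exact hmid l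
      _ = C * K * |(i : ℝ) - k| * Δx * ρ l := by ring
  rw [Amid, Amid, ← mul_sub, abs_mul, abs_of_nonneg (by positivity : 0 ≤ Δx / 2)]
  calc _ ≤ Δx / 2 * (C * K * |(i : ℝ) - k| * Δx * ∑' l, ρ l) := by
        gcongr
        exact abs_tsum_sub_tsum_le (hsumm i) (hsumm k) hsum hdiff
    _ = C / 2 * K * |(i : ℝ) - k| * Δx * (Δx * ∑' l, ρ l) := by ring

lemma abs_Amid_sub_Amid_pred_le {K B : ℝ} (hf0 : ∀ A, f 0 A = 0)
    (hfL : ∀ A x y, |f x A - f y A| ≤ L * |x - y|) (hμ : ∀ x y, |μ x - μ y| ≤ K * |x - y|)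
    (hμB : ∀ x, |μ x| ≤ B) (hK : 0 ≤ K) (hΔx : 0 ≤ Δx) (hlam : 0 ≤ lam) (hθ0 : 0 ≤ θ)
    (hθ1 : θ ≤ 1) (hρ : ∀ k, ρ k ∈ Set.Icc 0 S) (hsum : Summable ρ) (j : ℤ) :
    |Amid f μ θ lam Δx ρ j - Amid f μ θ lam Δx ρ (j - 1)|
      ≤ (1 + lam * L) * K * Δx * (Δx * ∑' l, ρ l) := by
  have hmid : ∀ l, |midR f μ θ lam Δx ρ l| + |midL f μ θ lam Δx ρ l|
      ≤ 2 * (1 + lam * L) * ρ l := fun l => by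
    linarith [abs_midR_le (μ := μ) (Δx := Δx) hf0 hfL hlam hθ0 hθ1 hρ l,
      abs_midL_le (μ := μ) (Δx := Δx) hf0 hfL hlam hθ0 hθ1 hρ l, intL_add_intR θ ρ l]
  have h := abs_Amid_sub_le hμ hμB hK hΔx hmid hsum j (j - 1)
  rw [show |(j : ℝ) - ((j - 1 : ℤ) : ℝ)| = 1 by push_cast; ring_nf; norm_num] at h
  exact h.trans_eq (by ring)

lemma exists_midL_midR_eq {M : ℝ} (hL0 : 0 ≤ L) (hfL : ∀ A x y, |f x A - f y A| ≤ L * |x - y|)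
    (hfA : ∀ r a b, |f r a - f r b| ≤ M * |r| * |a - b|) (hM0 : 0 ≤ M) (hθ0 : 0 ≤ θ)
    (hθ1 : θ ≤ 1) (hρ : ∀ k, ρ k ∈ Set.Icc 0 S) {s : ℝ} (l : ℤ) (hs : |sdisc μ θ Δx ρ l| ≤ s) :
    ∃ c e : ℝ, |c| ≤ L ∧ |e| ≤ M * S * s ∧
      midL f μ θ lam Δx ρ l = ρ l + (1 - lam * c) * (slp θ ρ l / 2) - lam / 2 * e ∧
      midR f μ θ lam Δx ρ l = ρ l + -(1 + lam * c) * (slp θ ρ l / 2) - lam / 2 * e := by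
  obtain ⟨c, hc, hsec⟩ := exists_abs_le_and_sub_eq_mul hL0 (hfL (AdiscL μ θ Δx ρ l))
    (intL θ ρ l) (intR θ ρ l)
  have hL : intL θ ρ l = ρ l + slp θ ρ l / 2 := rfl
  have hR : intR θ ρ l = ρ l - slp θ ρ l / 2 := rfl
  have hA : AdiscL μ θ Δx ρ l - AdiscR μ θ Δx ρ l = sdisc μ θ Δx ρ l := by
    rw [AdiscL, AdiscR]; ring
  have hRS := intR_mem_Icc hθ0 hθ1 hρ l
  refine ⟨c, f (intR θ ρ l) (AdiscL μ θ Δx ρ l) - f (intR θ ρ l) (AdiscR μ θ Δx ρ l), hc,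
    (hfA _ _ _).trans ?_, ?_, ?_⟩
  · rw [hA, abs_of_nonneg hRS.1]
    exact mul_le_mul (mul_le_mul_of_nonneg_left hRS.2 hM0) hs (abs_nonneg _)
      (mul_nonneg hM0 (hRS.1.trans hRS.2))
  · rw [midL]; linear_combination (1 - lam * c / 2) * hL + lam * c / 2 * hR - lam / 2 * hsec
  · rw [midR]; linear_combination (-(lam * c / 2)) * hL + (1 + lam * c / 2) * hR - lam / 2 * hsec

end MidTime

section Flux

variable {f : ℝ → ℝ → ℝ} {α lam L : ℝ}

lemma mul_numFlux (hlam : lam ≠ 0) (u v A : ℝ) :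
    lam * numFlux f α lam u v A = lam * (f u A + f v A) / 2 - α * (v - u) / 2 := by
  rw [numFlux]; field_simp

lemma frozen_update_mem_Icc {θ S r σ c b b' B : ℝ}
    (hfL : ∀ x y, |f x B - f y B| ≤ L * |x - y|) (hL0 : 0 ≤ L) (hlam : 0 < lam)
    (hαL : lam * L ≤ α) (hθ0 : 0 ≤ θ) (hθα : lam * L * (1 + α) * θ ≤ 1 - α)
    (hr : r ∈ Set.Icc 0 S) (hσ : |σ| ≤ 2 * θ * min r (S - r)) (hc : |c| ≤ L)
    (hb : b ∈ Set.Icc 0 S) (hb' : b' ∈ Set.Icc 0 S) :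
    r - lam * (numFlux f α lam (r + (1 - lam * c) * (σ / 2)) b B -
      numFlux f α lam b' (r + -(1 + lam * c) * (σ / 2)) B) ∈ Set.Icc 0 S := by
  obtain ⟨C₁, hC₁, h₁⟩ := exists_abs_le_and_sub_eq_mul hL0 hfL
    (r + (1 - lam * c) * (σ / 2)) (r + -(1 + lam * c) * (σ / 2))
  obtain ⟨C₂, hC₂, h₂⟩ := exists_abs_le_and_sub_eq_mul hL0 hfL b b'
  have hα : 0 ≤ α := (by positivity : 0 ≤ lam * L).trans hαL
  have heq : r - lam * (numFlux f α lam (r + (1 - lam * c) * (σ / 2)) b B -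
      numFlux f α lam b' (r + -(1 + lam * c) * (σ / 2)) B) =
      (1 - α) * r - lam / 2 * (C₁ - α * c) * σ + (α - lam * C₂) / 2 * b
        + (α + lam * C₂) / 2 * b' := by
    rw [mul_sub, mul_numFlux hlam.ne', mul_numFlux hlam.ne']
    linear_combination (-lam / 2) * h₁ - lam / 2 * h₂
  have hmin0 : 0 ≤ min r (S - r) := le_min hr.1 (sub_nonneg.2 hr.2)
  have hT : |lam / 2 * (C₁ - α * c) * σ| ≤ (1 - α) * min r (S - r) := by
    have hC : |C₁ - α * c| ≤ L * (1 + α) := by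
      calc |C₁ - α * c| ≤ |C₁| + α * |c| := by
            rw [← abs_of_nonneg hα, ← abs_mul, abs_of_nonneg hα]; exact abs_sub _ _
        _ ≤ L + α * L := by gcongr
        _ = L * (1 + α) := by ring
    calc |lam / 2 * (C₁ - α * c) * σ| = lam / 2 * |C₁ - α * c| * |σ| := by
          rw [abs_mul, abs_mul, abs_of_pos (half_pos hlam)]
      _ ≤ lam / 2 * (L * (1 + α)) * (2 * θ * min r (S - r)) := by gcongr
      _ = lam * L * (1 + α) * θ * min r (S - r) := by ring
      _ ≤ (1 - α) * min r (S - r) := by gcongr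
  have hC₂' : |lam * C₂| ≤ α := by
    rw [abs_mul, abs_of_pos hlam]
    exact (mul_le_mul_of_nonneg_left hC₂ hlam.le).trans hαL
  obtain ⟨hT₁, hT₂⟩ := abs_le.1 hT
  obtain ⟨hC₂₁, hC₂₂⟩ := abs_le.1 hC₂'
  have h1α : 0 ≤ 1 - α := (by positivity : 0 ≤ lam * L * (1 + α) * θ).trans hθα
  have hcb : 0 ≤ (α - lam * C₂) / 2 := by linarith
  have hcb' : 0 ≤ (α + lam * C₂) / 2 := by linarith
  rw [heq]
  constructor
  · linarith [mul_nonneg h1α (sub_nonneg.2 (min_le_left r (S - r))), mul_nonneg hcb hb.1,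
      mul_nonneg hcb' hb'.1]
  · linarith [mul_nonneg h1α (sub_nonneg.2 (min_le_right r (S - r))),
      mul_le_mul_of_nonneg_left hb.2 hcb, mul_le_mul_of_nonneg_left hb'.2 hcb']

lemma abs_numFlux_sub_le {M R D δ u v A u' v' A' : ℝ}
    (hfL : ∀ A x y, |f x A - f y A| ≤ L * |x - y|)
    (hfA : ∀ r a b, |f r a - f r b| ≤ M * |r| * |a - b|) (hL0 : 0 ≤ L) (hM0 : 0 ≤ M)
    (hα : 0 ≤ α) (hlam : 0 < lam) (hu : |u| ≤ R) (hv : |v| ≤ R) (hA : |A - A'| ≤ D)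
    (hu' : |u - u'| ≤ δ) (hv' : |v - v'| ≤ δ) :
    |numFlux f α lam u v A - numFlux f α lam u' v' A'| ≤ M * R * D + (lam * L + α) / lam * δ := by
  have h₁ := hfA u A A'
  have h₂ := hfL A' u u'
  have h₃ := hfA v A A'
  have h₄ := hfL A' v v'
  have hsplit : numFlux f α lam u v A - numFlux f α lam u' v' A' =
      ((f u A - f u A') + (f u A' - f u' A') + (f v A - f v A') + (f v A' - f v' A')) / 2
        + α / (2 * lam) * ((u - u') - (v - v')) := by
    simp only [numFlux]; ring
  have hF : |(f u A - f u A') + (f u A' - f u' A') + (f v A - f v A') + (f v A' - f v' A')|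
      ≤ M * |u| * |A - A'| + L * |u - u'| + M * |v| * |A - A'| + L * |v - v'| := by
    refine abs_le.2 ⟨?_, ?_⟩
    · linarith [neg_abs_le (f u A - f u A'), neg_abs_le (f u A' - f u' A'),
        neg_abs_le (f v A - f v A'), neg_abs_le (f v A' - f v' A')]
    · linarith [le_abs_self (f u A - f u A'), le_abs_self (f u A' - f u' A'),
        le_abs_self (f v A - f v A'), le_abs_self (f v A' - f v' A')]
  have hR : 0 ≤ R := (abs_nonneg u).trans hu
  rw [hsplit]
  calc _ ≤ |(f u A - f u A') + (f u A' - f u' A') + (f v A - f v A') + (f v A' - f v' A')| / 2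
        + α / (2 * lam) * |(u - u') - (v - v')| := by
        refine (abs_add_le _ _).trans_eq ?_
        rw [abs_div, abs_two, abs_mul, abs_of_nonneg (by positivity : 0 ≤ α / (2 * lam))]
    _ ≤ (M * |u| * |A - A'| + L * |u - u'| + M * |v| * |A - A'| + L * |v - v'|) / 2
        + α / (2 * lam) * (|u - u'| + |v - v'|) := by gcongr; exact abs_sub _ _
    _ ≤ (M * R * D + L * δ + M * R * D + L * δ) / 2 + α / (2 * lam) * (δ + δ) := by gcongr
    _ = M * R * D + (lam * L + α) / lam * δ := by field_simp; ring

end Flux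

lemma abs_sub_mul_sub_le_of_mem_Icc {r lam S F₁ F₂ G₁ G₂ a b : ℝ} (hlam : 0 ≤ lam)
    (hG : r - lam * (G₁ - G₂) ∈ Set.Icc 0 S) (h₁ : |F₁ - G₁| ≤ a) (h₂ : |F₂ - G₂| ≤ b) :
    |r - lam * (F₁ - F₂)| ≤ S + lam * (a + b) := by
  rw [show r - lam * (F₁ - F₂) = (r - lam * (G₁ - G₂)) - lam * ((F₁ - G₁) - (F₂ - G₂)) by ring]
  refine (abs_sub _ _).trans (add_le_add (abs_le.2 ⟨by linarith [hG.1, hG.2], hG.2⟩) ?_)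
  rw [abs_mul, abs_of_nonneg hlam]
  exact mul_le_mul_of_nonneg_left ((abs_sub _ _).trans (add_le_add h₁ h₂)) hlam

theorem abs_mhUpdate_le {f : ℝ → ℝ → ℝ} {μ : ℝ → ℝ} {θ α lam Δx L M K B S : ℝ} {ρ : ℤ → ℝ}
    (hf0 : ∀ A, f 0 A = 0) (hfL : ∀ A x y, |f x A - f y A| ≤ L * |x - y|)
    (hfA : ∀ r a b, |f r a - f r b| ≤ M * |r| * |a - b|)
    (hμ : ∀ x y, |μ x - μ y| ≤ K * |x - y|) (hμB : ∀ x, |μ x| ≤ B)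
    (hL0 : 0 ≤ L) (hM0 : 0 ≤ M) (hK : 0 ≤ K) (hΔx : 0 ≤ Δx) (hlam : 0 < lam)
    (hθ0 : 0 ≤ θ) (hθ : (1 + lam * L) * θ ≤ 1) (hαL : lam * L ≤ α)
    (hθα : lam * L * (1 + α) * θ ≤ 1 - α)
    (hρ : ∀ k, ρ k ∈ Set.Icc 0 S) (hsum : Summable ρ) (j : ℤ) :
    |mhUpdate f μ θ α lam Δx ρ j|
      ≤ S + lam * Δx * M * S * K * (Δx * ∑' l, ρ l)
          * ((1 + lam * L) ^ 2 + 2 * θ * (lam * L + α)) := by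
  set m := Δx * ∑' l, ρ l
  have hα : 0 ≤ α := (by positivity : 0 ≤ lam * L).trans hαL
  have hθ1 : θ ≤ 1 := (le_mul_of_one_le_left hθ0 (le_add_of_nonneg_right (by positivity))).trans hθ
  choose c e hc he hmidL hmidR using fun l =>
    exists_midL_midR_eq (lam := lam) hL0 hfL hfA hM0 hθ0 hθ1 hρ l
      (abs_sdisc_le hμ hμB hθ0 hΔx (fun k => (hρ k).1) hsum l)
  set E := M * S * (2 * θ * K * Δx * m)
  set hatL := fun l => ρ l + (1 - lam * c l) * (slp θ ρ l / 2) with hhatL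
  set hatR := fun l => ρ l + -(1 + lam * c l) * (slp θ ρ l / 2) with hhatR
  have hgap : ∀ l, |midL f μ θ lam Δx ρ l - hatL l| ≤ lam / 2 * E ∧
      |midR f μ θ lam Δx ρ l - hatR l| ≤ lam / 2 * E := fun l => by
    rw [hmidL l, hmidR l, hhatL, hhatR]
    simp only [sub_sub_cancel_left, abs_neg, abs_mul, abs_of_pos (half_pos hlam)]
    exact ⟨by gcongr; exact he l, by gcongr; exact he l⟩
  have hmid := abs_midL_midR_le (μ := μ) (Δx := Δx) hf0 hfL hlam.le hL0 hθ0 hθ1 hρ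
  have hP := frozen_update_mem_Icc (hfL (Amid f μ θ lam Δx ρ (j - 1))) hL0 hlam hαL hθ0 hθα
    (hρ j) (abs_slp_le hθ0 hρ j) (hc j)
    (add_mul_slp_mem_Icc_of_abs_le hθ0 hθ hρ hlam.le (hc (j + 1)) (j + 1)).2
    (add_mul_slp_mem_Icc_of_abs_le hθ0 hθ hρ hlam.le (hc (j - 1)) (j - 1)).1
  have hΔ₁ := abs_numFlux_sub_le hfL hfA hL0 hM0 hα hlam (hmid j).1 (hmid (j + 1)).2
    (abs_Amid_sub_Amid_pred_le hf0 hfL hμ hμB hK hΔx hlam.le hθ0 hθ1 hρ hsum j)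
    (hgap j).1 (hgap (j + 1)).2
  have hΔ₂ := abs_numFlux_sub_le hfL hfA hL0 hM0 hα hlam (hmid (j - 1)).1 (hmid j).2
    (by simp : |Amid f μ θ lam Δx ρ (j - 1) - Amid f μ θ lam Δx ρ (j - 1)| ≤ 0)
    (hgap (j - 1)).1 (hgap j).2
  rw [mhUpdate]
  refine (abs_sub_mul_sub_le_of_mem_Icc hlam.le hP hΔ₁ hΔ₂).trans_eq ?_
  field_simp
  ring

lemma lam_mul_le_of_cfl {lam L α a : ℝ} (hlam : 0 < lam) (hL0 : 0 ≤ L)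
    (h : lam ≤ min a (min (2 / (27 * L)) (α / L))) : lam * L ≤ 2 / 27 ∧ lam * L ≤ α := by
  obtain ⟨h₁, h₂⟩ := le_min_iff.1 (h.trans (min_le_right _ _))
  -- `α / 0 = 0`, so the condition rules out `L = 0`
  rcases hL0.eq_or_lt with rfl | hL
  · simp only [div_zero] at h₂; linarith
  · rw [le_div_iff₀ (by positivity)] at h₁
    rw [le_div_iff₀ hL] at h₂
    exact ⟨by linarith, h₂⟩

theorem stmt6_general (f : ℝ → ℝ → ℝ) (μ : ℝ → ℝ) (Δx Δt lam θ α L M Cμ' : ℝ)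
    (hΔx : 0 < Δx) (hΔt : 0 < Δt) (hlam : lam = Δt / Δx)
    (hθ0 : 0 ≤ θ) (hθ1 : θ ≤ 1 / 2) (hα0 : 0 < α) (hα1 : α < 8 / 27)
    (hf : ContDiff ℝ 2 (Function.uncurry f)) (hf0 : ∀ A : ℝ, f 0 A = 0)
    (hL : ∀ r A : ℝ, |deriv (fun x => f x A) r| ≤ L)
    (hdA : ∀ r a : ℝ, |deriv (f r) a| ≤ M * |r|)
    (hμ : ContDiff ℝ 2 μ) (hμc : HasCompactSupport μ)
    (hCμ' : ∀ x : ℝ, |deriv μ x| ≤ Cμ')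
    (hCFL : lam ≤ min ((8 - 27 * α) / (27 * L)) (min (2 / (27 * L)) (α / L)))
    (ρ : ℤ → ℝ) (hρ : ∀ j : ℤ, 0 ≤ ρ j) (hsum : Summable ρ)
    (hbdd : BddAbove (Set.range ρ)) (j : ℤ) :
    |mhUpdate f μ θ α lam Δx ρ j| ≤
      (1 + (α + lam * L + (1 + lam * L) ^ 2) * M * (1 + θ) ^ 2 * Cμ' *
          (Δx * ∑' l : ℤ, ρ l) * Δt) * ⨆ k : ℤ, ρ k := by
  have hlam0 : 0 < lam := hlam ▸ div_pos hΔt hΔx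
  have hL0 : 0 ≤ L := (abs_nonneg _).trans (hL 0 0)
  have hM0 : 0 ≤ M := by simpa using (abs_nonneg _).trans (hdA 1 0)
  have hK : 0 ≤ Cμ' := (abs_nonneg _).trans (hCμ' 0)
  obtain ⟨hlamL, hαL⟩ := lam_mul_le_of_cfl hlam0 hL0 hCFL
  have hlamLθ := mul_le_mul_of_nonneg_right hlamL hθ0
  have hfd : Differentiable ℝ (Function.uncurry f) := hf.differentiable (by norm_num)
  obtain ⟨B, hB⟩ := hμ.continuous.bounded_above_of_compact_support hμc
  have key := abs_mhUpdate_le (θ := θ) (α := α) (lam := lam) (Δx := Δx) (j := j) hf0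
    (fun A => abs_sub_le_of_abs_deriv_le (g := fun x => f x A)
      (hfd.comp (differentiable_id.prodMk (differentiable_const A))) (hL · A))
    (fun r => abs_sub_le_of_abs_deriv_le
      (hfd.comp ((differentiable_const r).prodMk differentiable_id)) (hdA r))
    (abs_sub_le_of_abs_deriv_le (hμ.differentiable (by norm_num)) hCμ') hB hL0 hM0 hK hΔx.le
    hlam0 hθ0 (by linarith) hαL
    (by linarith [mul_le_mul_of_nonneg_left hα1.le (by positivity : 0 ≤ lam * L * θ)])
    (fun k => ⟨hρ k, le_ciSup hbdd k⟩) hsum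
  rw [show lam * Δx = Δt by rw [hlam]; field_simp] at key
  have hS : 0 ≤ ⨆ k, ρ k := (hρ 0).trans (le_ciSup hbdd 0)
  have hm : 0 ≤ Δx * ∑' l, ρ l := mul_nonneg hΔx.le (tsum_nonneg hρ)
  have hcoef : (1 + lam * L) ^ 2 + 2 * θ * (lam * L + α)
      ≤ (1 + θ) ^ 2 * (α + lam * L + (1 + lam * L) ^ 2) := by
    linarith [mul_nonneg (by positivity : 0 ≤ θ ^ 2 + 2 * θ) (sq_nonneg (1 + lam * L)),
      mul_nonneg (by positivity : 0 ≤ 1 + θ ^ 2) (by positivity : 0 ≤ α + lam * L)]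
  refine key.trans ?_
  calc _ ≤ (⨆ k, ρ k) + Δt * M * (⨆ k, ρ k) * Cμ' * (Δx * ∑' l, ρ l)
          * ((1 + θ) ^ 2 * (α + lam * L + (1 + lam * L) ^ 2)) := by gcongr
    _ = _ := by ring

/-- one-step L∞-stability of the MUSCL–Hancock update. -/
theorem stmt6 (f : ℝ → ℝ → ℝ) (μ : ℝ → ℝ) (Δx Δt lam θ α L M Cμ' : ℝ)
    (hΔx : 0 < Δx) (hΔt : 0 < Δt) (hlam : lam = Δt / Δx)
    (hθ0 : 0 ≤ θ) (hθ1 : θ ≤ 1 / 2) (hα0 : 0 < α) (hα1 : α < 8 / 27)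
    (hf : ContDiff ℝ 2 (Function.uncurry f)) (hf0 : ∀ A : ℝ, f 0 A = 0)
    (hL : ∀ r A : ℝ, |deriv (fun x => f x A) r| ≤ L)
    (hM : 0 < M) (hdA : ∀ r a : ℝ, |deriv (f r) a| ≤ M * |r|)
    (hdAA : ∀ r a : ℝ, |iteratedDeriv 2 (f r) a| ≤ M * |r|)
    (hμ : ContDiff ℝ 2 μ) (hμc : HasCompactSupport μ)
    (hCμ' : ∀ x : ℝ, |deriv μ x| ≤ Cμ')
    (hCFL : lam ≤ min ((8 - 27 * α) / (27 * L)) (min (2 / (27 * L)) (α / L)))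
    (ρ : ℤ → ℝ) (hρ : ∀ j : ℤ, 0 ≤ ρ j) (hsum : Summable ρ)
    (hbdd : BddAbove (Set.range ρ)) (j : ℤ) :
    |mhUpdate f μ θ α lam Δx ρ j| ≤
      (1 + (α + lam * L + (1 + lam * L) ^ 2) * M * (1 + θ) ^ 2 * Cμ' *
          (Δx * ∑' l : ℤ, ρ l) * Δt) * ⨆ k : ℤ, ρ k :=
  stmt6_general f μ Δx Δt lam θ α L M Cμ' hΔx hΔt hlam hθ0 hθ1 hα0 hα1 hf hf0 hL hdA hμ hμc hCμ'
    hCFL ρ hρ hsum hbdd j
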